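/- arXiv:1603.06541 — 2 statements merged into one kernel-verified Lean document; each statement's English description precedes it below -/
import Mathlib

section
/- Let (x, y) be jointly Gaussian real random variables with x ~ N(0,1), y ~ N(0,1), and E[xy] = ρ. Then for every real t, E[cos(t x) cos(t y)] = (1/2) e^{-t²(1-ρ)} + (1/2) e^{-t²(1+ρ)}. In particular, with t = √γ for γ ≥ 0, E[cos(√γ x) cos(√γ y)] = (1/2) e^{-γ(1-ρ)} + (1/2) e^{-γ(1+ρ)}, i.e. the expectation equals the folded RBF kernel fRBF(γ, ρ). -/
open MeasureTheory ProbabilityTheory Real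

/-- The bivariate Gaussian distribution on `ℝ × ℝ` with standard normal marginals
and correlation `ρ ∈ [-1, 1]`: the law of `(z₁, ρ z₁ + √(1-ρ²) z₂)` where
`z₁, z₂` are i.i.d. standard normal. -/
noncomputable def biGaussian (ρ : ℝ) : Measure (ℝ × ℝ) :=
  Measure.map (fun z : ℝ × ℝ => (z.1, ρ * z.1 + Real.sqrt (1 - ρ ^ 2) * z.2))
    ((gaussianReal 0 1).prod (gaussianReal 0 1))

/-- The folded RBF kernel with parameter `γ` evaluated at correlation `ρ`:
`fRBF(γ, ρ) = (1/2) e^{-γ(1-ρ)} + (1/2) e^{-γ(1+ρ)}`. -/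
noncomputable def fRBF (γ ρ : ℝ) : ℝ :=
  (1 / 2) * Real.exp (-γ * (1 - ρ)) + (1 / 2) * Real.exp (-γ * (1 + ρ))

-- auxiliary lemmas
lemma gauss_cexp (a : ℝ) :
    ∫ x : ℝ, (gaussianPDFReal 0 1 x : ℂ) * Complex.exp ((a * x : ℝ) * Complex.I)
      = Complex.exp (-(a^2)/2) := by
  have hsq : Real.sqrt (2*π) ≠ 0 := by positivity
  have h : ∀ x : ℝ, (gaussianPDFReal 0 1 x : ℂ) * Complex.exp ((a * x : ℝ) * Complex.I)
      = ((Real.sqrt (2*π) : ℂ))⁻¹ *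
        Complex.exp ((-(1/2) : ℂ) * (x:ℂ)^2 + ((a:ℂ)*Complex.I) * x + 0) := by
    intro x
    rw [gaussianPDFReal]
    push_cast
    rw [show (2*π*1 : ℝ) = 2*π by ring, mul_assoc, ← Complex.exp_add]
    congr 2
    push_cast
    ring
  simp_rw [h]
  rw [integral_const_mul, integral_cexp_quadratic (by norm_num : (-(1/2):ℂ).re < 0)]
  have h2 : ((π : ℂ) / -(-(1/2))) ^ (1/2 : ℂ) = (Real.sqrt (2*π) : ℂ) := by
    rw [show ((π:ℂ) / -(-(1/2)) ) = ((2*π : ℝ) : ℂ) by push_cast; ring,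
      show (1/2 : ℂ) = ((1/2 : ℝ) : ℂ) by norm_num,
      ← Complex.ofReal_cpow (by positivity), ← Real.sqrt_eq_rpow]
  rw [h2, ← mul_assoc, inv_mul_cancel₀ (by exact_mod_cast hsq), one_mul]
  congr 1
  have : ((a:ℂ)*Complex.I)^2 = -(a^2 : ℝ) := by
    rw [mul_pow, Complex.I_sq]; push_cast; ring
  rw [this]
  push_cast
  ring

lemma gauss_int_eq (g : ℝ → ℝ) :
    ∫ x, g x ∂(gaussianReal 0 1) = ∫ x, gaussianPDFReal 0 1 x * g x := by
  rw [gaussianReal_of_var_ne_zero 0 one_ne_zero]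
  have : (gaussianPDF 0 1) = fun x => ((gaussianPDFReal 0 1 x).toNNReal : ENNReal) := rfl
  rw [this, integral_withDensity_eq_integral_smul
    (f := fun x => (gaussianPDFReal 0 1 x).toNNReal)
    (measurable_real_toNNReal.comp (measurable_gaussianPDFReal 0 1))]
  refine integral_congr_ae (Filter.Eventually.of_forall fun x => ?_)
  simp only [NNReal.smul_def, smul_eq_mul, Real.coe_toNNReal _ (gaussianPDFReal_nonneg 0 1 x)]

lemma gauss_form (a x : ℝ) :
    (gaussianPDFReal 0 1 x : ℂ) * Complex.exp ((a * x : ℝ) * Complex.I)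
      = ((Real.sqrt (2*π) : ℂ))⁻¹ *
        Complex.exp ((-(1/2) : ℂ) * (x:ℂ)^2 + ((a:ℂ)*Complex.I) * x + 0) := by
  rw [gaussianPDFReal]
  push_cast
  rw [show (2*π*1 : ℝ) = 2*π by ring, mul_assoc, ← Complex.exp_add]
  congr 2
  ring

lemma gauss_integrable (a : ℝ) :
    Integrable (fun x : ℝ => (gaussianPDFReal 0 1 x : ℂ) * Complex.exp ((a * x : ℝ) * Complex.I)) := by
  have := (integrable_cexp_quadratic' (b := -(1/2)) (by norm_num) ((a:ℂ)*Complex.I) 0).const_mul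
    ((Real.sqrt (2*π) : ℂ))⁻¹
  exact this.congr (Filter.Eventually.of_forall fun x => (gauss_form a x).symm)

lemma gauss_cos (a : ℝ) :
    ∫ x, Real.cos (a * x) ∂(gaussianReal 0 1) = Real.exp (-(a^2)/2) := by
  rw [gauss_int_eq]
  have h1 : ∀ x : ℝ, gaussianPDFReal 0 1 x * Real.cos (a * x)
      = ((gaussianPDFReal 0 1 x : ℂ) * Complex.exp ((a * x : ℝ) * Complex.I)).re := by
    intro x
    rw [Complex.re_ofReal_mul, Complex.exp_ofReal_mul_I_re]
  simp_rw [h1]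
  rw [show (fun x : ℝ => ((gaussianPDFReal 0 1 x : ℂ) * Complex.exp ((a * x : ℝ) * Complex.I)).re)
      = (fun x : ℝ => Complex.reCLM ((gaussianPDFReal 0 1 x : ℂ)
        * Complex.exp ((a * x : ℝ) * Complex.I))) from rfl,
    Complex.reCLM.integral_comp_comm (gauss_integrable a), gauss_cexp]
  rw [show (-(a^2)/2 : ℂ) = ((-(a^2)/2 : ℝ) : ℂ) by push_cast; ring]
  exact Complex.exp_ofReal_re _

lemma gauss_sin (a : ℝ) :
    ∫ x, Real.sin (a * x) ∂(gaussianReal 0 1) = 0 := by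
  rw [gauss_int_eq]
  have h1 : ∀ x : ℝ, gaussianPDFReal 0 1 x * Real.sin (a * x)
      = ((gaussianPDFReal 0 1 x : ℂ) * Complex.exp ((a * x : ℝ) * Complex.I)).im := by
    intro x
    rw [Complex.im_ofReal_mul, Complex.exp_ofReal_mul_I_im]
  simp_rw [h1]
  rw [show (fun x : ℝ => ((gaussianPDFReal 0 1 x : ℂ) * Complex.exp ((a * x : ℝ) * Complex.I)).im)
      = (fun x : ℝ => Complex.imCLM ((gaussianPDFReal 0 1 x : ℂ)
        * Complex.exp ((a * x : ℝ) * Complex.I))) from rfl,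
    Complex.imCLM.integral_comp_comm (gauss_integrable a), gauss_cexp]
  rw [show (-(a^2)/2 : ℂ) = ((-(a^2)/2 : ℝ) : ℂ) by push_cast; ring]
  exact Complex.exp_ofReal_im _

lemma int_bdd {f : ℝ → ℝ} (hf : Continuous f) (hb : ∀ x, |f x| ≤ 1) :
    Integrable f (gaussianReal 0 1) :=
  (integrable_const (1:ℝ)).mono' hf.aestronglyMeasurable
    (Filter.Eventually.of_forall fun x => by simpa using hb x)

/-- Let `(x, y)` be jointly Gaussian with `x ~ N(0,1)`, `y ~ N(0,1)` and
`E[x y] = ρ` (i.e. the joint law of `(x, y)` is the bivariate Gaussian with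
standard marginals and correlation `ρ`).  Then for every real `t`,
`E[cos(t x) cos(t y)] = (1/2) e^{-t²(1-ρ)} + (1/2) e^{-t²(1+ρ)}`; in particular,
for `t = √γ` with `γ ≥ 0`, the expectation equals the folded RBF kernel
`fRBF(γ, ρ)`. -/
theorem integral_cos_mul_cos_of_biGaussian
    {Ω : Type*} [MeasurableSpace Ω] (P : Measure Ω) [IsProbabilityMeasure P]
    (X Y : Ω → ℝ) {ρ : ℝ} (hρ : ρ ∈ Set.Icc (-1 : ℝ) 1)
    (hXY : Measure.map (fun ω => (X ω, Y ω)) P = biGaussian ρ) :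
    (∀ t : ℝ, ∫ ω, Real.cos (t * X ω) * Real.cos (t * Y ω) ∂P
        = (1 / 2) * Real.exp (-(t ^ 2) * (1 - ρ))
            + (1 / 2) * Real.exp (-(t ^ 2) * (1 + ρ))) ∧
    (∀ γ : ℝ, 0 ≤ γ →
      ∫ ω, Real.cos (Real.sqrt γ * X ω) * Real.cos (Real.sqrt γ * Y ω) ∂P
        = fRBF γ ρ) := by
  set s : ℝ := Real.sqrt (1 - ρ ^ 2) with hs
  have hs2 : s ^ 2 = 1 - ρ ^ 2 := Real.sq_sqrt (by nlinarith [hρ.1, hρ.2])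
  have hT : Measurable (fun z : ℝ × ℝ => (z.1, ρ * z.1 + s * z.2)) := by fun_prop
  have hPμ : IsProbabilityMeasure (biGaussian ρ) := by
    rw [biGaussian]
    exact Measure.isProbabilityMeasure_map hT.aemeasurable
  have hXYm : AEMeasurable (fun ω => (X ω, Y ω)) P := by
    by_contra h
    rw [Measure.map_of_not_aemeasurable h] at hXY
    have h1 := hPμ.measure_univ
    rw [← hXY] at h1
    simp at h1
  have key : ∀ t : ℝ, ∫ ω, Real.cos (t * X ω) * Real.cos (t * Y ω) ∂P
      = (1 / 2) * Real.exp (-(t ^ 2) * (1 - ρ)) + (1 / 2) * Real.exp (-(t ^ 2) * (1 + ρ)) := by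
    intro t
    have hFc : Continuous (fun p : ℝ × ℝ => Real.cos (t * p.1) * Real.cos (t * p.2)) := by fun_prop
    rw [← integral_map hXYm hFc.aestronglyMeasurable, hXY, biGaussian,
      integral_map hT.aemeasurable hFc.aestronglyMeasurable]
    have hexp : ∀ z : ℝ × ℝ, Real.cos (t * z.1) * Real.cos (t * (ρ * z.1 + s * z.2))
        = (Real.cos (t * z.1) * Real.cos ((t * ρ) * z.1)) * Real.cos ((t * s) * z.2)
          - (Real.cos (t * z.1) * Real.sin ((t * ρ) * z.1)) * Real.sin ((t * s) * z.2) := by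
      intro z
      rw [show t * (ρ * z.1 + s * z.2) = (t * ρ) * z.1 + (t * s) * z.2 by ring, Real.cos_add]
      ring
    simp only [hexp]
    have i1 : Integrable (fun x : ℝ => Real.cos (t * x) * Real.cos ((t * ρ) * x))
        (gaussianReal 0 1) := int_bdd (by fun_prop) fun x => by
      rw [abs_mul]
      exact mul_le_one₀ (Real.abs_cos_le_one _) (abs_nonneg _) (Real.abs_cos_le_one _)
    have i2 : Integrable (fun x : ℝ => Real.cos ((t * s) * x)) (gaussianReal 0 1) :=
      int_bdd (by fun_prop) fun x => Real.abs_cos_le_one _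
    have i3 : Integrable (fun x : ℝ => Real.cos (t * x) * Real.sin ((t * ρ) * x))
        (gaussianReal 0 1) := int_bdd (by fun_prop) fun x => by
      rw [abs_mul]
      exact mul_le_one₀ (Real.abs_cos_le_one _) (abs_nonneg _) (Real.abs_sin_le_one _)
    have i4 : Integrable (fun x : ℝ => Real.sin ((t * s) * x)) (gaussianReal 0 1) :=
      int_bdd (by fun_prop) fun x => Real.abs_sin_le_one _
    rw [integral_sub (i1.mul_prod i2) (i3.mul_prod i4), integral_prod_mul (fun x : ℝ => Real.cos (t * x) * Real.cos ((t * ρ) * x))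
        (fun x : ℝ => Real.cos ((t * s) * x)),
      integral_prod_mul (fun x : ℝ => Real.cos (t * x) * Real.sin ((t * ρ) * x))
        (fun x : ℝ => Real.sin ((t * s) * x)),
      gauss_sin, mul_zero, sub_zero, gauss_cos]
    have prodsum : (fun x : ℝ => Real.cos (t * x) * Real.cos ((t * ρ) * x))
        = (fun x : ℝ => (1/2) * Real.cos ((t + t * ρ) * x) + (1/2) * Real.cos ((t - t * ρ) * x)) := by
      funext x
      rw [show (t + t * ρ) * x = t * x + (t * ρ) * x by ring,
        show (t - t * ρ) * x = t * x - (t * ρ) * x by ring, Real.cos_add, Real.cos_sub]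
      ring
    rw [prodsum, integral_add ((int_bdd (by fun_prop) fun x => Real.abs_cos_le_one _).const_mul _)
      ((int_bdd (by fun_prop) fun x => Real.abs_cos_le_one _).const_mul _),
      integral_const_mul, integral_const_mul, gauss_cos, gauss_cos]
    rw [add_mul, mul_assoc, mul_assoc, ← Real.exp_add, ← Real.exp_add]
    have e1 : -((t + t * ρ) ^ 2) / 2 + -((t * s) ^ 2) / 2 = -(t ^ 2) * (1 + ρ) := by
      rw [mul_pow, hs2]; ring
    have e2 : -((t - t * ρ) ^ 2) / 2 + -((t * s) ^ 2) / 2 = -(t ^ 2) * (1 - ρ) := by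
      rw [mul_pow, hs2]; ring
    rw [e1, e2, add_comm]
  refine ⟨key, fun γ hγ => ?_⟩
  rw [key (Real.sqrt γ), Real.sq_sqrt hγ, fRBF]
end

section
/- Let u, v ∈ ℝ^D be unit vectors with correlation ρ = ⟨u, v⟩, and let r = (r₁, …, r_D) have i.i.d. standard normal coordinates. Then for every γ ≥ 0, E[ cos(√γ Σ_i u_i r_i) · cos(√γ Σ_i v_i r_i) ] = (1/2) e^{-γ(1-ρ)} + (1/2) e^{-γ(1+ρ)} = fRBF(γ, ρ). Hence averaging products of such cosine features over independent samples of r gives an unbiased linearization of the folded RBF kernel. -/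
open MeasureTheory ProbabilityTheory Finset Real

/-!
Under the standard Gaussian, `∫ cos ⟪x, t⟫` is the real part of the characteristic function
`exp (-‖t‖² / 2)`. The product-to-sum formula writes `cos ⟪x, a⟫ * cos ⟪x, b⟫` as the mean of
`cos ⟪x, a - b⟫` and `cos ⟪x, a + b⟫`; for `a = √γ u`, `b = √γ v` with unit `u, v` one has
`‖a ∓ b‖² = 2γ (1 ∓ ⟪u, v⟫)`.
-/

open scoped RealInnerProductSpace

section InnerProductSpace

variable {E : Type*} [NormedAddCommGroup E] [InnerProductSpace ℝ E] [MeasurableSpace E]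

lemma integral_cos_inner_eq_re_charFun [OpensMeasurableSpace E] (μ : Measure E)
    [IsFiniteMeasure μ] (t : E) :
    ∫ x, cos ⟪x, t⟫ ∂μ = (charFun μ t).re := by
  have integrable_cexp : Integrable (fun x => Complex.exp (⟪x, t⟫ * Complex.I)) μ := by
    refine (integrable_const (1 : ℝ)).mono' (by fun_prop) (ae_of_all _ fun x => ?_)
    rw [Complex.norm_exp_ofReal_mul_I]
  rw [charFun_apply, ← RCLike.re_to_complex, ← integral_re integrable_cexp]
  simp_rw [RCLike.re_to_complex, Complex.exp_ofReal_mul_I_re]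

variable [FiniteDimensional ℝ E] [BorelSpace E]

lemma integral_cos_inner_stdGaussian (t : E) :
    ∫ x, cos ⟪x, t⟫ ∂stdGaussian E = exp (-‖t‖ ^ 2 / 2) := by
  rw [integral_cos_inner_eq_re_charFun, charFun_stdGaussian, ← Complex.ofReal_pow,
    ← Complex.ofReal_neg, ← Complex.ofReal_ofNat, ← Complex.ofReal_div, Complex.exp_ofReal_re]

lemma integral_cos_inner_mul_cos_inner_stdGaussian (a b : E) :
    ∫ x, cos ⟪x, a⟫ * cos ⟪x, b⟫ ∂stdGaussian E
      = (exp (-‖a - b‖ ^ 2 / 2) + exp (-‖a + b‖ ^ 2 / 2)) / 2 := by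
  have hprod (x : E) : cos ⟪x, a⟫ * cos ⟪x, b⟫ = (cos ⟪x, a - b⟫ + cos ⟪x, a + b⟫) / 2 := by
    rw [inner_sub_right, inner_add_right, cos_sub, cos_add]; ring
  have integrable_cos (t : E) : Integrable (fun x => cos ⟪x, t⟫) (stdGaussian E) :=
    (integrable_const (1 : ℝ)).mono' (by fun_prop)
      (ae_of_all _ fun x => by simpa using abs_cos_le_one _)
  simp_rw [hprod]
  rw [integral_div, integral_add (integrable_cos _) (integrable_cos _), integral_cos_inner_stdGaussian,
    integral_cos_inner_stdGaussian]

theorem integral_cos_inner_mul_cos_inner_stdGaussian_eq_fRBF {u v : E} (hu : ‖u‖ = 1)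
    (hv : ‖v‖ = 1) {γ : ℝ} (hγ : 0 ≤ γ) :
    ∫ x, cos (√γ * ⟪x, u⟫) * cos (√γ * ⟪x, v⟫) ∂stdGaussian E = fRBF γ ⟪u, v⟫ := by
  simp_rw [← real_inner_smul_right]
  rw [integral_cos_inner_mul_cos_inner_stdGaussian, ← smul_sub, ← smul_add, norm_smul,
    norm_smul, mul_pow, mul_pow, norm_sub_sq_real, norm_add_sq_real, hu, hv, Real.norm_eq_abs,
    sq_abs, sq_sqrt hγ, fRBF]
  ring_nf

end InnerProductSpace

open WithLp in
lemma integral_pi_gaussianReal_eq_integral_stdGaussian {ι F : Type*} [Fintype ι]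
    [NormedAddCommGroup F] [NormedSpace ℝ F] (f : (ι → ℝ) → F) :
    ∫ r, f r ∂(Measure.pi fun _ : ι => gaussianReal 0 1)
      = ∫ x, f (ofLp x) ∂stdGaussian (EuclideanSpace ℝ ι) := by
  rw [← map_pi_eq_stdGaussian, ← MeasurableEquiv.coe_toLp, integral_map_equiv]
  rfl

/-- Let `u, v ∈ ℝ^D` be unit vectors with correlation `ρ = ⟨u, v⟩`, and let `r`
have i.i.d. standard normal coordinates.  Then for every `γ ≥ 0`,
`E[cos(√γ ∑ᵢ uᵢ rᵢ) · cos(√γ ∑ᵢ vᵢ rᵢ)] = (1/2) e^{-γ(1-ρ)} + (1/2) e^{-γ(1+ρ)}`,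
i.e. the cosine features give an unbiased linearization of the folded RBF kernel. -/
theorem integral_cos_proj_mul_cos_proj_eq_fRBF
    {D : ℕ} (u v : Fin D → ℝ)
    (hu : Real.sqrt (∑ i, u i ^ 2) = 1) (hv : Real.sqrt (∑ i, v i ^ 2) = 1)
    (ρ : ℝ) (hρ : ρ = ∑ i, u i * v i) {γ : ℝ} (hγ : 0 ≤ γ) :
    ∫ r : Fin D → ℝ,
        Real.cos (Real.sqrt γ * ∑ i, u i * r i) *
          Real.cos (Real.sqrt γ * ∑ i, v i * r i)
        ∂(Measure.pi fun _ : Fin D => gaussianReal 0 1)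
      = fRBF γ ρ := by
  have sum_mul_eq_inner (w : Fin D → ℝ) (x : EuclideanSpace ℝ (Fin D)) :
      ∑ i, w i * x i = ⟪x, WithLp.toLp 2 w⟫ := by
    simp [PiLp.inner_apply]
  have norm_toLp (w : Fin D → ℝ) : ‖WithLp.toLp 2 w‖ = √(∑ i, w i ^ 2) := by
    simp [EuclideanSpace.norm_eq]
  rw [integral_pi_gaussianReal_eq_integral_stdGaussian]
  simp_rw [sum_mul_eq_inner]
  rw [integral_cos_inner_mul_cos_inner_stdGaussian_eq_fRBF ((norm_toLp u).trans hu)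
    ((norm_toLp v).trans hv) hγ, hρ, sum_mul_eq_inner, real_inner_comm]
end
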